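/- Let D > 0, t > 0, v ∈ ℝ, and let z_b^TX < z_b^S and z_a^RX < z_b^RX be real numbers. Define b₀ = z_b^RX − z_b^TX − v·t, b₁ = z_b^RX − z_b^S − v·t, b₂ = z_a^RX − z_b^S − v·t, b₃ = z_a^RX − z_b^TX − v·t. Then (1/(z_b^S − z_b^TX))·∫_{z_b^TX}^{z_b^S} ∫_{z_a^RX}^{z_b^RX} (1/√(4πDt))·exp(−(z_r − z_m − v·t)²/(4Dt)) dz_r dz_m = (1/(2·(z_b^S − z_b^TX)))·Σ_{i=0}^{3} (−1)^i·[b_i·erf(b_i/√(4Dt)) + √(4Dt/π)·exp(−b_i²/(4Dt))]. (This is the channel impulse response h₁(t), Eq. (25) of the paper, for a molecule uniformly distributed outside the TX region at time 0.) -/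

import Mathlib

/-- The Gaussian error function `erf(x) = (2/√π)·∫₀ˣ exp(−u²) du`. -/
noncomputable def erf (x : ℝ) : ℝ :=
  (2 / Real.sqrt Real.pi) * ∫ u in (0:ℝ)..x, Real.exp (-u ^ 2)

/-!
The inner integral of the Gaussian kernel over the receiver is a difference of two error
functions. Integrating over the uniformly distributed release point then only requires an
antiderivative of `erf`, namely `x erf x + exp (-x²) / √π`, evaluated at the four endpoint
combinations `b i / √(4Dt)`; rescaling by `√(4Dt)` gives the four bracketed terms.
-/

open Real intervalIntegral

theorem hasDerivAt_erf (x : ℝ) : HasDerivAt erf (2 / √π * exp (-x ^ 2)) x := by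
  have hc : Continuous fun u : ℝ => exp (-u ^ 2) := by fun_prop
  exact (integral_hasDerivAt_right (hc.intervalIntegrable 0 x)
    hc.aestronglyMeasurable.stronglyMeasurableAtFilter hc.continuousAt).const_mul _

theorem continuous_erf : Continuous erf :=
  continuous_iff_continuousAt.2 fun x => (hasDerivAt_erf x).continuousAt

theorem integral_exp_neg_sq (a b : ℝ) :
    ∫ x in a..b, exp (-x ^ 2) = √π / 2 * (erf b - erf a) := by
  have hc : Continuous fun u : ℝ => exp (-u ^ 2) := by fun_prop
  have hpi : √π ≠ 0 := (sqrt_pos.2 pi_pos).ne'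
  rw [erf, erf, ← mul_sub, integral_interval_sub_left (hc.intervalIntegrable _ _)
    (hc.intervalIntegrable _ _)]
  field_simp

theorem integral_gaussian_eq_erf_sub {s : ℝ} (hs : s ≠ 0) (μ a b : ℝ) :
    ∫ x in a..b, 1 / (s * √π) * exp (-((x - μ) / s) ^ 2) =
      (erf ((b - μ) / s) - erf ((a - μ) / s)) / 2 := by
  have hpi : √π ≠ 0 := (sqrt_pos.2 pi_pos).ne'
  rw [integral_const_mul, integral_comp_sub_right (fun x => exp (-(x / s) ^ 2)),
    integral_comp_div (fun u => exp (-u ^ 2)) hs, integral_exp_neg_sq, smul_eq_mul]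
  field_simp

noncomputable def erfAntideriv (x : ℝ) : ℝ := x * erf x + exp (-x ^ 2) / √π

theorem hasDerivAt_erfAntideriv (x : ℝ) : HasDerivAt erfAntideriv (erf x) x := by
  have hpi : √π ≠ 0 := (sqrt_pos.2 pi_pos).ne'
  have hexp : HasDerivAt (fun x : ℝ => exp (-x ^ 2)) (exp (-x ^ 2) * -(2 * x)) x := by
    simpa using (hasDerivAt_pow 2 x).neg.exp
  refine (((hasDerivAt_id' x).mul (hasDerivAt_erf x)).add
    (hexp.div_const √π)).congr_deriv ?_
  field_simp
  ring

theorem integral_erf (a b : ℝ) : ∫ x in a..b, erf x = erfAntideriv b - erfAntideriv a :=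
  integral_eq_sub_of_hasDerivAt (fun x _ => hasDerivAt_erfAntideriv x)
    (continuous_erf.intervalIntegrable a b)

theorem integral_erf_sub_div {s : ℝ} (hs : s ≠ 0) (c a b : ℝ) :
    ∫ z in a..b, erf ((c - z) / s) =
      s * (erfAntideriv ((c - a) / s) - erfAntideriv ((c - b) / s)) := by
  rw [integral_comp_sub_left (fun x => erf (x / s)), integral_comp_div erf hs, integral_erf,
    smul_eq_mul]

theorem mul_erfAntideriv_div {s : ℝ} (hs : s ≠ 0) (x : ℝ) :
    s * erfAntideriv (x / s) = x * erf (x / s) + s / √π * exp (-(x / s) ^ 2) := by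
  rw [erfAntideriv]
  field_simp

theorem stmt_6_general (D t v zbTX zbS zaRX zbRX : ℝ) (hD : 0 < D) (ht : 0 < t)
    (b : Fin 4 → ℝ)
    (hb : b = ![zbRX - zbTX - v * t, zbRX - zbS - v * t,
                zaRX - zbS - v * t, zaRX - zbTX - v * t]) :
    (1 / (zbS - zbTX)) * ∫ zm in zbTX..zbS, ∫ zr in zaRX..zbRX,
        (1 / Real.sqrt (4 * Real.pi * D * t)) *
          Real.exp (-(zr - zm - v * t) ^ 2 / (4 * D * t)) =
      (1 / (2 * (zbS - zbTX))) * ∑ i : Fin 4, (-1 : ℝ) ^ (i : ℕ) *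
        (b i * erf (b i / Real.sqrt (4 * D * t)) +
          Real.sqrt (4 * D * t / Real.pi) * Real.exp (-(b i) ^ 2 / (4 * D * t))) := by
  have h4Dt : 0 < 4 * D * t := by positivity
  set s := √(4 * D * t) with hs_def
  have hs : s ≠ 0 := (sqrt_pos.2 h4Dt).ne'
  have hexp (x : ℝ) : exp (-x ^ 2 / (4 * D * t)) = exp (-(x / s) ^ 2) := by
    rw [div_pow, sq_sqrt h4Dt.le, neg_div]
  have hkernel (zm zr : ℝ) : 1 / √(4 * π * D * t) * exp (-(zr - zm - v * t) ^ 2 / (4 * D * t)) =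
      1 / (s * √π) * exp (-((zr - (zm + v * t)) / s) ^ 2) := by
    rw [hexp, sub_sub, show 4 * π * D * t = 4 * D * t * π by ring, sqrt_mul h4Dt.le]
  have hinner (zm : ℝ) : ∫ zr in zaRX..zbRX,
      1 / √(4 * π * D * t) * exp (-(zr - zm - v * t) ^ 2 / (4 * D * t)) =
      (erf ((zbRX - v * t - zm) / s) - erf ((zaRX - v * t - zm) / s)) / 2 := by
    rw [integral_congr fun zr _ => hkernel zm zr, integral_gaussian_eq_erf_sub hs, sub_sub,
      sub_sub, add_comm zm]
  have herf (c : ℝ) : IntervalIntegrable (fun z => erf ((c - z) / s)) MeasureTheory.volume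
      zbTX zbS := (continuous_erf.comp (by fun_prop)).intervalIntegrable _ _
  rw [integral_congr fun zm _ => hinner zm, integral_div, integral_sub (herf _) (herf _),
    integral_erf_sub_div hs, integral_erf_sub_div hs]
  subst hb
  simp only [Fin.sum_univ_four, Matrix.cons_val, sqrt_div h4Dt.le, ← hs_def, hexp,
    mul_sub s, mul_erfAntideriv_div hs, sub_right_comm _ (v * t), Fin.coe_ofNat_eq_mod,
    Nat.reduceMod]
  rw [mul_comm 2, ← div_div]
  ring

/-- Eq. (25): the channel impulse response `h₁(t)` for a molecule uniformly
distributed outside the TX region, i.e. in `[zbTX, zbS]`, at time 0, observed in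
the RX region `[zaRX, zbRX]` at time `t`. -/
theorem stmt_6 (D t v zbTX zbS zaRX zbRX : ℝ) (hD : 0 < D) (ht : 0 < t)
    (hS : zbTX < zbS) (hRX : zaRX < zbRX)
    (b : Fin 4 → ℝ)
    (hb : b = ![zbRX - zbTX - v * t, zbRX - zbS - v * t,
                zaRX - zbS - v * t, zaRX - zbTX - v * t]) :
    (1 / (zbS - zbTX)) * ∫ zm in zbTX..zbS, ∫ zr in zaRX..zbRX,
        (1 / Real.sqrt (4 * Real.pi * D * t)) *
          Real.exp (-(zr - zm - v * t) ^ 2 / (4 * D * t)) =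
      (1 / (2 * (zbS - zbTX))) * ∑ i : Fin 4, (-1 : ℝ) ^ (i : ℕ) *
        (b i * erf (b i / Real.sqrt (4 * D * t)) +
          Real.sqrt (4 * D * t / Real.pi) * Real.exp (-(b i) ^ 2 / (4 * D * t))) :=
  stmt_6_general D t v zbTX zbS zaRX zbRX hD ht b hb
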